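/- Let E = [[2,0,1],[2,0,2],[2,0,1]] and F = [[2,1,0],[2,1,0],[2,0,1]], and let 𝒫 denote the set of all finite products T_1 T_2 ⋯ T_k with each T_i ∈ {E, F} (including the empty product, the 3×3 identity matrix). Let S be any 3×3 matrix of the form S = [[a,0,0],[a,0,0],[0,0,−b]] with real numbers a ≥ b ≥ 0. Then for all M_1, M_2 ∈ 𝒫, the scalar (1,1,1) · M_1 S M_2 · (1,1,1)ᵗ is nonnegative. -/

import Mathlib

open Matrix

/-- The matrix `E = [[2,0,1],[2,0,2],[2,0,1]]`. -/
def matE : Matrix (Fin 3) (Fin 3) ℝ := !![2, 0, 1; 2, 0, 2; 2, 0, 1]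

/-- The matrix `F = [[2,1,0],[2,1,0],[2,0,1]]`. -/
def matF : Matrix (Fin 3) (Fin 3) ℝ := !![2, 1, 0; 2, 1, 0; 2, 0, 1]

/-- `𝒫` is the set of all finite products of copies of `E` and `F` (including the empty
product, the identity matrix). -/
def prodSet : Set (Matrix (Fin 3) (Fin 3) ℝ) :=
  {M | ∃ l : List (Matrix (Fin 3) (Fin 3) ℝ), (∀ T ∈ l, T = matE ∨ T = matF) ∧ M = l.prod}

/-!
Write `u = 1ᵀ M₁` for the column sums of `M₁` and `v = M₂ 1` for the row sums of `M₂`.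
The sum of the entries of `M₁ S M₂` is then `u S v = a (u₀ + u₁) v₀ - b u₂ v₂`.
The cone of nonnegative `u` with `u₂ ≤ u₀ + u₁` contains `1ᵀ` and is stable under
`u ↦ u E` and `u ↦ u F`; the cone of `v` with `0 ≤ v₂ ≤ min v₀ v₁` contains `1` and is
stable under `v ↦ E v` and `v ↦ F v`. On these cones
`b u₂ v₂ ≤ b (u₀ + u₁) v₀ ≤ a (u₀ + u₁) v₀`.
-/

namespace Matrix

variable {m n R : Type*} [Fintype m] [Fintype n] [Semiring R]

theorem sum_sum_eq_one_dotProduct_mulVec_one (M : Matrix m n R) :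
    ∑ i, ∑ j, M i j = 1 ⬝ᵥ (M *ᵥ 1) := by
  simp [mulVec, dotProduct]

theorem list_prod_mulVec_mem [DecidableEq n] {C : Set (n → R)} (l : List (Matrix n n R))
    (hl : ∀ T ∈ l, ∀ v ∈ C, T *ᵥ v ∈ C) {v : n → R} (hv : v ∈ C) : l.prod *ᵥ v ∈ C := by
  induction l with
  | nil => simpa using hv
  | cons T l ih =>
    rw [List.prod_cons, ← mulVec_mulVec]
    exact hl T List.mem_cons_self _ (ih fun S hS => hl S (List.mem_cons_of_mem T hS))

theorem vecMul_list_prod_mem [DecidableEq n] {C : Set (n → R)} (l : List (Matrix n n R))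
    (hl : ∀ T ∈ l, ∀ v ∈ C, v ᵥ* T ∈ C) {v : n → R} (hv : v ∈ C) : v ᵥ* l.prod ∈ C := by
  induction l generalizing v with
  | nil => simpa using hv
  | cons T l ih =>
    rw [List.prod_cons, ← vecMul_vecMul]
    exact ih (fun S hS => hl S (List.mem_cons_of_mem T hS)) (hl T List.mem_cons_self v hv)

end Matrix

def columnSumCone : Set (Fin 3 → ℝ) := {u | 0 ≤ u 0 ∧ 0 ≤ u 1 ∧ 0 ≤ u 2 ∧ u 2 ≤ u 0 + u 1}

def rowSumCone : Set (Fin 3 → ℝ) := {v | 0 ≤ v 2 ∧ v 2 ≤ v 0 ∧ v 2 ≤ v 1}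

theorem vecMul_mem_columnSumCone {T : Matrix (Fin 3) (Fin 3) ℝ} (hT : T = matE ∨ T = matF)
    {u : Fin 3 → ℝ} (hu : u ∈ columnSumCone) : u ᵥ* T ∈ columnSumCone := by
  obtain ⟨h0, h1, h2, h3⟩ := hu
  rcases hT with rfl | rfl <;> refine ⟨?_, ?_, ?_, ?_⟩ <;>
    simp [vecMul, dotProduct, Fin.sum_univ_three, matE, matF] <;> linarith

theorem mulVec_mem_rowSumCone {T : Matrix (Fin 3) (Fin 3) ℝ} (hT : T = matE ∨ T = matF)
    {v : Fin 3 → ℝ} (hv : v ∈ rowSumCone) : T *ᵥ v ∈ rowSumCone := by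
  obtain ⟨h2, h0, h1⟩ := hv
  rcases hT with rfl | rfl <;> refine ⟨?_, ?_, ?_⟩ <;>
    simp [mulVec, dotProduct, Fin.sum_univ_three, matE, matF] <;> linarith

theorem one_mem_columnSumCone : (1 : Fin 3 → ℝ) ∈ columnSumCone := by
  norm_num [columnSumCone]

theorem one_mem_rowSumCone : (1 : Fin 3 → ℝ) ∈ rowSumCone := by
  norm_num [rowSumCone]

theorem dotProduct_mulVec_nonneg_of_mem_cones {a b : ℝ} (hb : 0 ≤ b) (hab : b ≤ a)
    {u v : Fin 3 → ℝ} (hu : u ∈ columnSumCone) (hv : v ∈ rowSumCone) :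
    0 ≤ u ⬝ᵥ (!![a, 0, 0; a, 0, 0; 0, 0, -b] *ᵥ v) := by
  obtain ⟨-, -, hu₂, hu⟩ := hu
  obtain ⟨hv₂, hv, -⟩ := hv
  have hu₀₁ : 0 ≤ u 0 + u 1 := hu₂.trans hu
  have hv₀ : 0 ≤ v 0 := hv₂.trans hv
  have hform : u ⬝ᵥ (!![a, 0, 0; a, 0, 0; 0, 0, -b] *ᵥ v) =
      a * (u 0 + u 1) * v 0 - b * u 2 * v 2 := by
    simp [dotProduct, mulVec, Fin.sum_univ_three]
    ring
  have hbound : b * u 2 * v 2 ≤ a * (u 0 + u 1) * v 0 :=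
    calc b * u 2 * v 2 ≤ b * (u 0 + u 1) * v 0 := by gcongr
      _ ≤ a * (u 0 + u 1) * v 0 := by gcongr
  rw [hform]
  linarith

/-- For any matrix `S = [[a,0,0],[a,0,0],[0,0,−b]]` with `a ≥ b ≥ 0` and any
`M₁, M₂ ∈ 𝒫`, the scalar `(1,1,1)·M₁SM₂·(1,1,1)ᵗ` (the sum of all entries of `M₁SM₂`) is
nonnegative. -/
theorem sum_entries_sandwich_nonneg (a b : ℝ) (hb : 0 ≤ b) (hab : b ≤ a)
    (M₁ M₂ : Matrix (Fin 3) (Fin 3) ℝ) (hM₁ : M₁ ∈ prodSet) (hM₂ : M₂ ∈ prodSet) :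
    0 ≤ ∑ i, ∑ j, (M₁ * !![a, 0, 0; a, 0, 0; 0, 0, -b] * M₂) i j := by
  obtain ⟨l₁, hl₁, rfl⟩ := hM₁
  obtain ⟨l₂, hl₂, rfl⟩ := hM₂
  rw [sum_sum_eq_one_dotProduct_mulVec_one, ← mulVec_mulVec, ← mulVec_mulVec, dotProduct_mulVec]
  have hu : 1 ᵥ* l₁.prod ∈ columnSumCone :=
    vecMul_list_prod_mem l₁ (fun T hT _ => vecMul_mem_columnSumCone (hl₁ T hT))
      one_mem_columnSumCone
  have hv : l₂.prod *ᵥ 1 ∈ rowSumCone :=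
    list_prod_mulVec_mem l₂ (fun T hT _ => mulVec_mem_rowSumCone (hl₂ T hT)) one_mem_rowSumCone
  exact dotProduct_mulVec_nonneg_of_mem_cones hb hab hu hv
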